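/- arXiv:math/9805128 — 2 statements merged into one kernel-verified Lean document; each statement's English description precedes it below -/
import Mathlib

section
/- Let M_0 be a simple matroid with element ε_0 that is not an isthmus (coloop), and n ≥ 2. Let M_n = C_n ⊕ M_0 and M'_n = P(C_n, M_0) ⊕ S, where S is an isthmus. Then T_{M_n}(x,y) ≠ T_{M'_n}(x,y). -/
open MvPolynomial Classical
open scoped Matroid

variable {α β : Type*}

/-- The rank of a set in a matroid: the largest cardinality of an independent subset. -/
noncomputable def Matroid.mrank (M : Matroid α) (X : Set α) : ℕ :=
  sSup {n | ∃ I, M.Indep I ∧ I ⊆ X ∧ I.ncard = n}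

/-- The Tutte polynomial (corank–nullity sum) of a matroid on a finite type,
as a polynomial in two variables `X 0` and `X 1`. -/
noncomputable def Matroid.tutte [Fintype α] (M : Matroid α) : MvPolynomial (Fin 2) ℤ :=
  ∑ A ∈ Finset.univ.filter (fun A : Finset α => (A : Set α) ⊆ M.E),
    (X 0 - 1) ^ (M.mrank M.E - M.mrank (A : Set α)) *
      (X 1 - 1) ^ (A.card - M.mrank (A : Set α))

/-- A circuit: a minimal dependent subset of the ground set. -/
def Matroid.IsCircuit' (M : Matroid α) (C : Set α) : Prop :=
  C ⊆ M.E ∧ ¬ M.Indep C ∧ ∀ D ⊂ C, M.Indep D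

/-- Deletion of a set of elements. -/
def Matroid.del (M : Matroid α) (D : Set α) : Matroid α := M ↾ (M.E \ D)

/-- Contraction of a set of elements, via the dual. -/
def Matroid.con (M : Matroid α) (C : Set α) : Matroid α := (M✶ ↾ (M✶.E \ C))✶

/-- A coloop (isthmus): an element of every base. -/
def Matroid.IsColoop' (M : Matroid α) (e : α) : Prop := ∀ B, M.IsBase B → e ∈ B

/-- A simple matroid: every set of at most two elements of the ground set is independent. -/
def Matroid.IsSimple (M : Matroid α) : Prop := ∀ X ⊆ M.E, X.ncard ≤ 2 → M.Indep X

/-- A connected matroid: any two distinct elements lie on a common circuit. -/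
def Matroid.IsConnected (M : Matroid α) : Prop :=
  M.E.Nonempty ∧ ∀ e ∈ M.E, ∀ f ∈ M.E, e = f ∨ ∃ C, M.IsCircuit' C ∧ e ∈ C ∧ f ∈ C

/-! Evaluate both Tutte polynomials at `(2, 1)`, where `T_M(2, 1)` counts the independent sets
of `M` and is multiplicative over direct sums. The circuit `C_n` has `2 ^ n - 1` independent
sets. An independent set of `P(C_n, M₀)` is `a ∪ c` with `a ⊆ C_n - ε₀` and `c` independent in
`M₀`, subject to `ε₀ ∉ c` and `c + ε₀` independent in `M₀` when `a = C_n - ε₀`; so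
`T_{M'_n}(2, 1) = 2 ((2 ^ (n - 1) - 1) I + J)`, with `I` the number of independent sets of `M₀`
and `J` the number of those containing `ε₀`. As `ε₀` is not a coloop, `2 J < I`, which makes
this smaller than `T_{M_n}(2, 1) = (2 ^ n - 1) I`. -/

lemma Finset.card_filter_powerset_union {s t : Finset α} (hst : Disjoint s t)
    (p : Finset α → Prop) [DecidablePred p] :
    ((s ∪ t).powerset.filter p).card =
      ∑ a ∈ s.powerset, (t.powerset.filter fun c ↦ p (a ∪ c)).card := by
  rw [← Finset.card_sigma]
  have hunion {A : Finset α} (hA : A ⊆ s ∪ t) : A ∩ s ∪ A ∩ t = A := by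
    rw [← Finset.inter_union_distrib_left, Finset.inter_eq_left.2 hA]
  have hsplit {a c : Finset α} (ha : a ⊆ s) (hc : c ⊆ t) :
      (a ∪ c) ∩ s = a ∧ (a ∪ c) ∩ t = c := by
    have := Finset.disjoint_left.1 hst
    constructor <;> ext x <;> simp only [Finset.mem_inter, Finset.mem_union] <;> grind
  refine Finset.card_nbij' (fun A ↦ ⟨A ∩ s, A ∩ t⟩) (fun x ↦ x.1 ∪ x.2) ?_ ?_ ?_ ?_
  · intro A hA
    simp only [Finset.coe_filter, Finset.mem_powerset, Finset.coe_sigma, Set.mem_sigma_iff,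
      Finset.mem_coe, Set.mem_ofPred_eq, Finset.inter_subset_right, true_and] at hA ⊢
    rw [hunion hA.1]
    exact hA.2
  · rintro ⟨a, c⟩ hx
    simp only [Finset.coe_filter, Finset.mem_powerset, Finset.coe_sigma, Set.mem_sigma_iff,
      Finset.mem_coe, Set.mem_ofPred_eq] at hx ⊢
    exact ⟨Finset.union_subset_union hx.1 hx.2.1, hx.2.2⟩
  · intro A hA
    simp only [Finset.coe_filter, Finset.mem_powerset] at hA
    exact hunion hA.1
  · rintro ⟨a, c⟩ hx
    simp only [Finset.coe_sigma, Set.mem_sigma_iff, Finset.mem_coe, Finset.mem_powerset,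
      Finset.mem_filter] at hx
    simp only [hsplit hx.1 hx.2.1]

namespace Matroid

variable {M : Matroid α} {X : Set α}

lemma ncard_le_mrank_iff (hX : X.Finite) : X.ncard ≤ M.mrank X ↔ M.Indep X := by
  have hbdd : BddAbove {n | ∃ I, M.Indep I ∧ I ⊆ X ∧ I.ncard = n} :=
    ⟨X.ncard, by rintro _ ⟨I, -, hIX, rfl⟩; exact Set.ncard_le_ncard hIX hX⟩
  refine ⟨fun h ↦ ?_, fun h ↦ le_csSup hbdd ⟨X, h, subset_rfl, rfl⟩⟩
  obtain ⟨I, hI, hIX, hIcard⟩ :=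
    Nat.sSup_mem (s := {n | ∃ I, M.Indep I ∧ I ⊆ X ∧ I.ncard = n})
      ⟨0, ∅, M.empty_indep, Set.empty_subset X, Set.ncard_empty α⟩ hbdd
  rwa [Set.eq_of_subset_of_ncard_le hIX (hIcard ▸ h) hX] at hI

lemma isCircuit'_iff {C : Set α} : M.IsCircuit' C ↔ M.IsCircuit C := by
  rw [isCircuit_iff_forall_ssubset, Dep, IsCircuit']
  tauto

lemma indep_iff_forall_isCircuit'_not_subset (hX : X ⊆ M.E) :
    M.Indep X ↔ ∀ C, M.IsCircuit' C → ¬ C ⊆ X := by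
  simp_rw [indep_iff_forall_subset_not_isCircuit hX, isCircuit'_iff]
  exact forall_congr' fun C ↦ imp_not_comm

/-- The parallel connection `P(N, M)` along `e`, specified by its ground set and circuits. -/
def IsParallelConnection (P N M : Matroid α) (e : α) : Prop :=
  P.E = N.E ∪ M.E ∧ ∀ C, P.IsCircuit' C ↔ (N.IsCircuit' C ∨ M.IsCircuit' C ∨
    ∃ C₁ C₂, N.IsCircuit' C₁ ∧ M.IsCircuit' C₂ ∧ e ∈ C₁ ∧ e ∈ C₂ ∧
      C = (C₁ \ {e}) ∪ (C₂ \ {e}))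

namespace IsParallelConnection

variable {P N M : Matroid α} {e : α}

lemma isCircuit'_iff_of_circuit (hP : P.IsParallelConnection N M e)
    (hN : ∀ C, N.IsCircuit' C ↔ C = N.E) (he : e ∈ N.E) {C : Set α} :
    P.IsCircuit' C ↔ C = N.E ∨ M.IsCircuit' C ∨
      ∃ C₂, M.IsCircuit' C₂ ∧ e ∈ C₂ ∧ C = (N.E \ {e}) ∪ (C₂ \ {e}) := by
  rw [hP.2, hN]
  constructor
  · rintro (h | h | ⟨C₁, C₂, h₁, h₂, -, he₂, rfl⟩)
    · exact Or.inl h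
    · exact Or.inr (Or.inl h)
    · exact Or.inr (Or.inr ⟨C₂, h₂, he₂, by rw [(hN C₁).1 h₁]⟩)
  · rintro (h | h | ⟨C₂, h₂, he₂, rfl⟩)
    · exact Or.inl h
    · exact Or.inr (Or.inl h)
    · exact Or.inr (Or.inr ⟨N.E, C₂, (hN _).2 rfl, h₂, he, he₂, rfl⟩)

lemma indep_union_iff_of_circuit (hP : P.IsParallelConnection N M e)
    (hN : ∀ C, N.IsCircuit' C ↔ C = N.E) (hNM : N.E ∩ M.E = {e}) {a c : Set α}
    (ha : a ⊆ N.E \ {e}) (hc : c ⊆ M.E) :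
    P.Indep (a ∪ c) ↔
      if a = N.E \ {e} then e ∉ c ∧ M.Indep (insert e c) else M.Indep c := by
  have heN : e ∈ N.E := (hNM.symm.subset rfl).1
  have heM : e ∈ M.E := (hNM.symm.subset rfl).2
  have hsub_c {X : Set α} (hXM : X ⊆ M.E) (hX : X ⊆ a ∪ c) : X ⊆ c := by
    intro x hx
    refine (hX hx).resolve_left fun hxa ↦ (ha hxa).2 ?_
    exact hNM.subset ⟨(ha hxa).1, hXM hx⟩
  have hfull : N.E \ {e} ⊆ a ∪ c ↔ a = N.E \ {e} := by
    refine ⟨fun h ↦ ha.antisymm fun x hx ↦ ?_, fun h ↦ h ▸ Set.subset_union_left⟩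
    exact (h hx).resolve_right fun hxc ↦ hx.2 (hNM.subset ⟨hx.1, hc hxc⟩)
  have hea : e ∉ a := fun h ↦ (ha h).2 rfl
  have hground : a ∪ c ⊆ P.E := by
    rw [hP.1]
    exact Set.union_subset_union (ha.trans Set.sdiff_subset) hc
  simp_rw [indep_iff_forall_isCircuit'_not_subset hground, hP.isCircuit'_iff_of_circuit hN heN,
    indep_iff_forall_isCircuit'_not_subset hc,
    indep_iff_forall_isCircuit'_not_subset (Set.insert_subset heM hc)]
  split_ifs with hfa
  · constructor
    · intro h
      refine ⟨fun hec ↦ h N.E (Or.inl rfl) fun x hx ↦ ?_, fun C hC hCsub ↦ ?_⟩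
      · by_cases hxe : x = e
        · exact Or.inr (hxe ▸ hec)
        · exact Or.inl (hfa ▸ ⟨hx, hxe⟩)
      · by_cases heC : e ∈ C
        · refine h _ (Or.inr (Or.inr ⟨C, hC, heC, rfl⟩)) (Set.union_subset (hfull.2 hfa) ?_)
          exact (Set.sdiff_singleton_subset_iff.2 hCsub).trans Set.subset_union_right
        · refine h C (Or.inr (Or.inl hC)) ?_
          exact ((Set.subset_insert_iff_of_notMem heC).1 hCsub).trans Set.subset_union_right
    · rintro ⟨hec, h⟩ C hC hCsub
      rcases hC with rfl | hC | ⟨C₂, hC₂, -, rfl⟩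
      · exact hec ((hCsub heN).resolve_left hea)
      · exact h C hC ((hsub_c hC.1 hCsub).trans (Set.subset_insert e c))
      · refine h C₂ hC₂ (Set.sdiff_singleton_subset_iff.1 (hsub_c ?_ ?_))
        exacts [Set.sdiff_subset.trans hC₂.1, (Set.union_subset_iff.1 hCsub).2]
  · constructor
    · exact fun h C hC hCsub ↦ h C (Or.inr (Or.inl hC)) (hCsub.trans Set.subset_union_right)
    · intro h C hC hCsub
      rcases hC with rfl | hC | ⟨C₂, -, -, rfl⟩
      · exact hfa (hfull.1 (Set.sdiff_subset.trans hCsub))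
      · exact h C hC (hsub_c hC.1 hCsub)
      · exact hfa (hfull.1 (Set.union_subset_iff.1 hCsub).1)

end IsParallelConnection

variable [Fintype α]

noncomputable def numIndep (M : Matroid α) : ℕ :=
  (Finset.univ.filter fun A : Finset α ↦ M.Indep ↑A).card

lemma eval_two_one_tutte (M : Matroid α) : eval ![(2 : ℤ), 1] M.tutte = M.numIndep := by
  have hterm (A : Finset α) : eval ![(2 : ℤ), 1]
      ((X 0 - 1 : MvPolynomial (Fin 2) ℤ) ^ (M.mrank M.E - M.mrank ↑A) *
        (X 1 - 1) ^ (A.card - M.mrank ↑A)) = if M.Indep ↑A then 1 else 0 := by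
    rw [← ncard_le_mrank_iff A.finite_toSet, Set.ncard_coe_finset, ← Nat.sub_eq_zero_iff_le]
    simp [zero_pow_eq]
  rw [tutte, map_sum, Finset.sum_congr rfl fun A _ ↦ hterm A, Finset.sum_boole, numIndep,
    Finset.filter_filter]
  congr 2
  exact Finset.filter_congr fun A _ ↦ and_iff_right_of_imp Indep.subset_ground

lemma numIndep_sum [Fintype β] (M : Matroid α) (N : Matroid β) :
    (M.sum N).numIndep = M.numIndep * N.numIndep := by
  rw [numIndep, numIndep, numIndep, ← Finset.card_product]
  refine Finset.card_equiv Finset.sumEquiv.toEquiv fun A ↦ ?_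
  have hinl : Sum.inl ⁻¹' (A : Set (α ⊕ β)) = ↑A.toLeft := by ext; simp
  have hinr : Sum.inr ⁻¹' (A : Set (α ⊕ β)) = ↑A.toRight := by ext; simp
  simp [hinl, hinr]

lemma numIndep_freeOn_univ : (freeOn (Set.univ : Set α)).numIndep = 2 ^ Fintype.card α := by
  simp [numIndep]

lemma numIndep_of_isCircuit'_ground (hM : M.IsCircuit' M.E) :
    M.numIndep = 2 ^ M.E.ncard - 1 := by
  have hindep (A : Finset α) :
      M.Indep ↑A ↔ A ∈ M.E.toFinset.powerset.erase M.E.toFinset := by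
    have hssub : M.Indep ↑A ↔ ↑A ⊂ M.E :=
      ⟨fun h ↦ h.subset_ground.ssubset_of_ne fun hA ↦ hM.2.1 (hA ▸ h), hM.2.2 _⟩
    rw [hssub, ← Set.coe_toFinset M.E, Finset.coe_ssubset, Finset.ssubset_iff_subset_ne]
    simp [and_comm]
  rw [numIndep, Finset.filter_congr fun A _ ↦ hindep A, Finset.filter_univ_mem,
    Finset.card_erase_of_mem (Finset.mem_powerset_self _), Finset.card_powerset,
    Set.ncard_eq_toFinset_card']

lemma filter_powerset_ground_eq (M : Matroid α) {q : Finset α → Prop}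
    [DecidablePred q] (hq : ∀ A, q A → M.Indep ↑A) :
    M.E.toFinset.powerset.filter q = Finset.univ.filter q := by
  ext A
  simpa using fun h ↦ (hq A h).subset_ground

lemma two_mul_card_indep_insert_lt_numIndep (M : Matroid α) {e : α}
    (he : ¬ M.IsColoop' e) :
    2 * (Finset.univ.filter fun c : Finset α ↦ e ∉ c ∧ M.Indep ↑(insert e c)).card <
      M.numIndep := by
  set S := Finset.univ.filter fun c : Finset α ↦ e ∉ c ∧ M.Indep ↑(insert e c)
  set T := Finset.univ.filter fun c : Finset α ↦ M.Indep ↑c ∧ e ∉ c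
  set U := Finset.univ.filter fun c : Finset α ↦ M.Indep ↑c ∧ e ∈ c
  have hsplit : M.numIndep = U.card + T.card := by
    rw [numIndep, ← Finset.card_filter_add_card_filter_not (fun c : Finset α ↦ e ∈ c),
      Finset.filter_filter, Finset.filter_filter]
  have hSU : S.card ≤ U.card := by
    refine Finset.card_le_card_of_injOn (insert e) (fun c hc ↦ ?_) (fun c hc d hd hcd ↦ ?_)
    · simp_all [S, U]
    · rw [Finset.mem_coe, Finset.mem_filter] at hc hd
      rw [← Finset.erase_insert hc.2.1, hcd, Finset.erase_insert hd.2.1]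
  have hST : S ⊂ T := by
    refine Finset.ssubset_iff_of_subset (fun c hc ↦ ?_) |>.2 ?_
    · simp only [S, T, Finset.mem_filter, Finset.mem_univ, true_and, Finset.coe_insert] at hc ⊢
      exact ⟨hc.2.subset (Set.subset_insert e _), hc.1⟩
    · obtain ⟨B, hB, heB⟩ : ∃ B, M.IsBase B ∧ e ∉ B := by simpa [IsColoop'] using he
      refine ⟨B.toFinset, by simp [T, hB.indep, heB], ?_⟩
      simp only [S, Finset.mem_filter, Finset.mem_univ, true_and, Finset.coe_insert,
        Set.coe_toFinset, not_and]
      exact fun _ hind ↦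
        heB (hB.eq_of_subset_indep hind (Set.subset_insert e B) ▸ Set.mem_insert e B)
  have := Finset.card_lt_card hST
  omega

namespace IsParallelConnection

variable {P N M : Matroid α} {e : α}

lemma numIndep_eq_of_circuit (hP : P.IsParallelConnection N M e)
    (hN : ∀ C, N.IsCircuit' C ↔ C = N.E) (hNM : N.E ∩ M.E = {e}) :
    P.numIndep = (2 ^ (N.E.ncard - 1) - 1) * M.numIndep +
      (Finset.univ.filter fun c : Finset α ↦ e ∉ c ∧ M.Indep ↑(insert e c)).card := by
  have heN : e ∈ N.E := (hNM.symm.subset rfl).1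
  have heM : e ∈ M.E := (hNM.symm.subset rfl).2
  set u := (N.E \ {e}).toFinset
  set f := M.E.toFinset
  have hdisj : Disjoint u f := by
    rw [Set.disjoint_toFinset, Set.disjoint_left]
    exact fun x hx hxM ↦ hx.2 (hNM.subset ⟨hx.1, hxM⟩)
  have hground : P.E.toFinset = u ∪ f := by
    rw [← Set.toFinset_union, Set.toFinset_inj, hP.1]
    ext x
    by_cases hx : x = e <;> simp [hx, heM]
  have hfiber (a : Finset α) (ha : a ∈ u.powerset) :
      (f.powerset.filter fun c ↦ P.Indep ↑(a ∪ c)).card = if a = u then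
        (Finset.univ.filter fun c : Finset α ↦ e ∉ c ∧ M.Indep ↑(insert e c)).card
        else M.numIndep := by
    have ha' : (a : Set α) ⊆ N.E \ {e} := by
      rw [← Set.coe_toFinset (N.E \ {e}), Finset.coe_subset]
      exact Finset.mem_powerset.1 ha
    have hc' {c : Finset α} (hc : c ∈ f.powerset) : (c : Set α) ⊆ M.E := by
      rw [← Set.coe_toFinset M.E, Finset.coe_subset]
      exact Finset.mem_powerset.1 hc
    have hau : a = u ↔ (a : Set α) = N.E \ {e} := by rw [← Finset.coe_inj, Set.coe_toFinset]
    simp_rw [hau, Finset.coe_union]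
    split_ifs with hfull
    · rw [Finset.filter_congr (q := fun c : Finset α ↦ e ∉ c ∧ M.Indep ↑(insert e c))
          fun c hc ↦ by rw [hP.indep_union_iff_of_circuit hN hNM ha' (hc' hc), if_pos hfull,
            Finset.coe_insert, Finset.mem_coe],
        M.filter_powerset_ground_eq fun c h ↦ h.2.subset (Finset.subset_insert e c)]
    · rw [Finset.filter_congr fun c hc ↦ by
        rw [hP.indep_union_iff_of_circuit hN hNM ha' (hc' hc), if_neg hfull],
        M.filter_powerset_ground_eq fun _ h ↦ h, numIndep]
  rw [numIndep, ← P.filter_powerset_ground_eq fun _ h ↦ h, hground,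
    Finset.card_filter_powerset_union hdisj, Finset.sum_congr rfl hfiber, Finset.sum_ite,
    Finset.filter_eq', Finset.filter_ne', if_pos (Finset.mem_powerset_self u), Finset.sum_singleton,
    Finset.sum_const, Finset.card_erase_of_mem (Finset.mem_powerset_self u), Finset.card_powerset,
    smul_eq_mul, ← Set.ncard_eq_toFinset_card', Set.ncard_sdiff_singleton_of_mem heN, add_comm]

lemma two_mul_numIndep_lt (hP : P.IsParallelConnection N M e)
    (hN : ∀ C, N.IsCircuit' C ↔ C = N.E) (hNM : N.E ∩ M.E = {e}) (he : ¬ M.IsColoop' e) :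
    2 * P.numIndep < (2 ^ N.E.ncard - 1) * M.numIndep := by
  have hn : 1 ≤ N.E.ncard := (Set.ncard_pos N.E.toFinite).2 ⟨e, (hNM.symm.subset rfl).1⟩
  have hpow : 2 ^ N.E.ncard = 2 * 2 ^ (N.E.ncard - 1) := by
    rw [← pow_succ', Nat.sub_add_cancel hn]
  have hlt := M.two_mul_card_indep_insert_lt_numIndep he
  have hk : 1 ≤ 2 ^ (N.E.ncard - 1) := Nat.one_le_two_pow
  rw [hP.numIndep_eq_of_circuit hN hNM, hpow]
  zify [hk, (by omega : 1 ≤ 2 * 2 ^ (N.E.ncard - 1))] at hlt ⊢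
  nlinarith

end IsParallelConnection

end Matroid

theorem tutte_ne_of_parallelConnection_general [Fintype α] (M₀ Cn P : Matroid α)
    (ε₀ : α)
    (hCncirc : ∀ C, Cn.IsCircuit' C ↔ C = Cn.E)
    (hmeet : Cn.E ∩ M₀.E = {ε₀})
    (hPE : P.E = Cn.E ∪ M₀.E)
    (hPcirc : ∀ C, P.IsCircuit' C ↔ (Cn.IsCircuit' C ∨ M₀.IsCircuit' C ∨
      ∃ C₁ C₂, Cn.IsCircuit' C₁ ∧ M₀.IsCircuit' C₂ ∧ ε₀ ∈ C₁ ∧ ε₀ ∈ C₂ ∧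
        C = (C₁ \ {ε₀}) ∪ (C₂ \ {ε₀})))
    (hcoloop : ¬ M₀.IsColoop' ε₀) :
    (Cn.sum M₀).tutte ≠ (P.sum (Matroid.freeOn (Set.univ : Set Unit))).tutte := by
  intro h
  have hcount := congrArg (eval ![(2 : ℤ), 1]) h
  simp only [Matroid.eval_two_one_tutte, Matroid.numIndep_sum, Matroid.numIndep_freeOn_univ,
    Matroid.numIndep_of_isCircuit'_ground ((hCncirc _).2 rfl), Fintype.card_unit, pow_one,
    Nat.cast_inj] at hcount
  have hlt :=
    Matroid.IsParallelConnection.two_mul_numIndep_lt ⟨hPE, hPcirc⟩ hCncirc hmeet hcoloop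
  omega

/-- If `ε₀` is not a coloop of `M₀`, then `M_n = C_n ⊕ M₀` and
`M'_n = P(C_n, M₀) ⊕ S` (with `S` an isthmus) have different Tutte polynomials. -/
theorem tutte_ne_of_parallelConnection [Fintype α] (n : ℕ) (hn : 2 ≤ n) (M₀ Cn P : Matroid α)
    (hsimple : M₀.IsSimple) (ε₀ : α) (hε : ε₀ ∈ M₀.E)
    (hCncirc : ∀ C, Cn.IsCircuit' C ↔ C = Cn.E) (hCncard : Cn.E.ncard = n)
    (hmeet : Cn.E ∩ M₀.E = {ε₀})
    (hPE : P.E = Cn.E ∪ M₀.E)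
    (hPcirc : ∀ C, P.IsCircuit' C ↔ (Cn.IsCircuit' C ∨ M₀.IsCircuit' C ∨
      ∃ C₁ C₂, Cn.IsCircuit' C₁ ∧ M₀.IsCircuit' C₂ ∧ ε₀ ∈ C₁ ∧ ε₀ ∈ C₂ ∧
        C = (C₁ \ {ε₀}) ∪ (C₂ \ {ε₀})))
    (hcoloop : ¬ M₀.IsColoop' ε₀) :
    (Cn.sum M₀).tutte ≠ (P.sum (Matroid.freeOn (Set.univ : Set Unit))).tutte :=
  tutte_ne_of_parallelConnection_general M₀ Cn P ε₀ hCncirc hmeet hPE hPcirc hcoloop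
end

section
/- Every connected matroid M on at least two elements has nonzero beta invariant; equivalently, it is impossible that T_M(x,y) = x · T_{M/e}(x,y) for a non-coloop element e of M. Concretely: if e is not a coloop, then T_M(1,1) > T_{M/e}(1,1), so T_M(x,y) ≠ x·T_{M/e}(x,y). -/
/-! The evaluation `T_M(1,1)` counts the bases of `M`. If `e` is not a loop (connectivity on at
least two elements puts `e` on a circuit with another element), `B ↦ B ∪ {e}` is a bijection from
the bases of `M / e` onto the bases of `M` containing `e`; as `e` is not a coloop, some base of `M`
avoids `e`, so `T_{M/e}(1,1) < T_M(1,1)`. An identity `T_M = x · T_{M/e}` would force equality at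
`(1,1)`. -/

open MvPolynomial Classical
open scoped Matroid

variable {α β : Type*}

namespace Matroid

open Finset

variable {M : Matroid α} {A : Set α} {e : α}

lemma con_eq_contract (M : Matroid α) (C : Set α) : M.con C = M ／ C := rfl

lemma IsNonloop.contract_isBase_iff (he : M.IsNonloop e) :
    (M ／ {e}).IsBase A ↔ M.IsBase (insert e A) ∧ e ∉ A := by
  rw [he.indep.contract_isBase_iff, Set.union_singleton, Set.disjoint_singleton_right]

lemma IsConnected.isNonloop (hM : M.IsConnected) (hcard : 2 ≤ M.E.ncard) (he : e ∈ M.E) :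
    M.IsNonloop e := by
  obtain ⟨f, hf, hfe⟩ := Set.exists_ne_of_one_lt_ncard hcard e
  obtain rfl | ⟨C, hC, heC, hfC⟩ := hM.2 e he f hf
  · exact absurd rfl hfe
  rw [← indep_singleton]
  refine hC.2.2 {e} ((Set.singleton_subset_iff.2 heC).ssubset_of_ne ?_)
  rintro rfl
  exact hfe hfC

section Finite

variable [Finite α]

lemma cast_mrank (M : Matroid α) (X : Set α) : (M.mrank X : ℕ∞) = M.eRk X := by
  obtain ⟨I, hI⟩ := M.exists_isBasis' X
  have hmax : IsGreatest {n | ∃ J, M.Indep J ∧ J ⊆ X ∧ J.ncard = n} I.ncard := by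
    refine ⟨⟨I, hI.indep, hI.subset, rfl⟩, ?_⟩
    rintro _ ⟨J, hJ, hJX, rfl⟩
    have := hJ.encard_le_eRk_of_subset hJX
    rw [← hI.encard_eq_eRk, ← J.toFinite.cast_ncard_eq, ← I.toFinite.cast_ncard_eq] at this
    exact_mod_cast this
  rw [mrank, hmax.csSup_eq, I.toFinite.cast_ncard_eq, hI.encard_eq_eRk]

lemma isBase_iff_mrank :
    M.IsBase A ↔ M.mrank M.E ≤ M.mrank A ∧ A.ncard ≤ M.mrank A := by
  rw [← Nat.cast_le (α := ℕ∞), ← Nat.cast_le (α := ℕ∞), cast_mrank, cast_mrank, eRk_ground,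
    A.toFinite.cast_ncard_eq]
  refine ⟨fun hB => ⟨hB.eRk_eq_eRank.ge, hB.indep.eRk_eq_encard.ge⟩, fun ⟨hrk, hcard⟩ => ?_⟩
  exact ((M.isRkFinite_of_finite A.toFinite).indep_of_encard_le_eRk hcard).isBase_of_eRk_ge
    A.toFinite hrk

end Finite

lemma eval_one_tutte [Fintype α] (M : Matroid α) :
    eval (fun _ => (1 : ℤ)) M.tutte = #{A : Finset α | M.IsBase A} := by
  have hterm (A : Finset α) :
      eval (fun _ => (1 : ℤ)) ((X 0 - 1 : MvPolynomial (Fin 2) ℤ) ^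
          (M.mrank M.E - M.mrank (A : Set α)) * (X 1 - 1) ^ (A.card - M.mrank (A : Set α))) =
        if M.IsBase A then 1 else 0 := by
    simp only [map_mul, map_pow, map_sub, eval_X, map_one, sub_self, zero_pow_eq,
      ite_zero_mul_ite_zero, one_mul, Nat.sub_eq_zero_iff_le, isBase_iff_mrank,
      Set.ncard_coe_finset]
  rw [tutte, map_sum, sum_congr rfl fun A _ => hterm A, sum_boole, filter_filter]
  congr 2
  exact filter_congr fun A _ => and_iff_right_of_imp IsBase.subset_ground

lemma IsNonloop.card_isBase_contract_eq [Fintype α] (he : M.IsNonloop e) :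
    #{A : Finset α | (M ／ {e}).IsBase A} = #{A : Finset α | M.IsBase A ∧ e ∈ A} := by
  refine card_nbij' (insert e) (fun A => A.erase e) ?_ ?_ ?_ ?_ <;> intro A hA <;>
    simp only [mem_coe, mem_filter, mem_univ, true_and, he.contract_isBase_iff] at hA ⊢
  · exact ⟨by rw [coe_insert]; exact hA.1, mem_insert_self e A⟩
  · rw [coe_erase, Set.insert_sdiff_singleton, Set.insert_eq_of_mem (mem_coe.2 hA.2)]
    exact ⟨hA.1, notMem_erase e A⟩
  · exact erase_insert (mem_coe.not.1 hA.2)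
  · exact insert_erase hA.2

lemma IsNonloop.card_isBase_contract_lt [Fintype α] (he : M.IsNonloop e)
    (hcoloop : ¬ M.IsColoop' e) :
    #{A : Finset α | (M ／ {e}).IsBase A} < #{A : Finset α | M.IsBase A} := by
  obtain ⟨B, hB, heB⟩ : ∃ B, M.IsBase B ∧ e ∉ B := by simpa [IsColoop'] using hcoloop
  rw [he.card_isBase_contract_eq, ← filter_filter]
  refine card_lt_card (filter_ssubset.2 ⟨B.toFinset, ?_, ?_⟩) <;> simpa

end Matroid

/-- A connected matroid on at least two elements has nonzero beta invariant: for a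
non-coloop element `e`, `T_{M/e}(1,1) < T_M(1,1)` and hence `T_M ≠ x · T_{M/e}`. -/
theorem tutte_ne_x_mul_contract [Fintype α] (M : Matroid α) (hconn : M.IsConnected)
    (hcard : 2 ≤ M.E.ncard) (e : α) (he : e ∈ M.E) (hcoloop : ¬ M.IsColoop' e) :
    MvPolynomial.eval (fun _ => (1 : ℤ)) (M.con {e}).tutte <
        MvPolynomial.eval (fun _ => (1 : ℤ)) M.tutte ∧
      M.tutte ≠ X 0 * (M.con {e}).tutte := by
  have hlt : eval (fun _ => (1 : ℤ)) (M.con {e}).tutte < eval (fun _ => (1 : ℤ)) M.tutte := by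
    rw [Matroid.eval_one_tutte, Matroid.eval_one_tutte, Matroid.con_eq_contract]
    exact_mod_cast (hconn.isNonloop hcard he).card_isBase_contract_lt hcoloop
  refine ⟨hlt, fun h => hlt.ne' ?_⟩
  simpa using congrArg (eval fun _ => (1 : ℤ)) h
end
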